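/- Assume 0 < γ < 1, 0 ≤ ε < 1/2, and γ·(1−2ε)·(2(g−1)−2gε) > 2−g. Set R_C = (1−ε)·2g + ε·g and R_D = (1−ε)·2 + ε·(2+g). Define the Q-table Q by: Q((C,C),C) = Q((D,D),C) = ((1−γε)·R_C + γε·R_D)/(1−γ); Q((C,D),D) = Q((D,C),D) = (γ(1−ε)·R_C + (1−γ(1−ε))·R_D)/(1−γ); Q((C,C),D) = Q((D,D),D) = γ(1−ε)·Q((D,C),D) + γε·Q((D,D),C) + (1−ε)(2+g) + 2ε; Q((C,D),C) = Q((D,C),C) = γ(1−ε)·Q((C,D),D) + γε·Q((C,C),C) + (1−ε)g + 2gε. Then Q is an ε-greedy fixed point of the self-play multi-agent Bellman equation, and its greedy policy is Pavlov: Q(s,C) > Q(s,D) for s ∈ {(C,C),(D,D)} and Q(s,C) < Q(s,D) for s ∈ {(C,D),(D,C)}. -/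

import Mathlib

/-! Under Pavlov self-play the next state is coordinated with probability `1 - ε` and
miscoordinated with probability `ε`, whether the current state is cooperative (`(C,C)`, `(D,D)`)
or defecting (`(C,D)`, `(D,C)`). So the two state values `V`, `W` share their continuation and
`V - W = R_C - R_D = 2(g - 1) - 2gε`. The advantage of the Pavlov action over the other one is
`γ(1 - 2ε)(V - W) + (g - 2)` in cooperative states and `γ(1 - 2ε)(V - W) + (2 - g)` in defecting
ones, both positive under the hypothesis; hence the greedy policy is Pavlov, and the Bellman
equation reduces to the linear equations that define the table. -/

inductive Act | C | D
deriving DecidableEq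

open Act

abbrev State := Act × Act

/-- The greedy action of a Q-table in a state (ties broken toward D). -/
noncomputable def greedy (Q : State → Act → ℝ) (s : State) : Act :=
  if Q s C > Q s D then C else D

/-- The other (non-greedy) action. -/
def other : Act → Act
  | C => D
  | D => C

def pavlov (s : State) : Act := if s.1 = s.2 then C else D

lemma pavlov_swap (s : State) : pavlov (s.2, s.1) = pavlov s := by
  obtain ⟨a, b⟩ := s
  simp only [pavlov, eq_comm]

lemma greedy_eq_of_other_lt {Q : State → Act → ℝ} {s : State} {a : Act}
    (h : Q s (other a) < Q s a) : greedy Q s = a := by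
  cases a
  · exact if_pos h
  · exact if_neg h.not_gt

lemma max_eq_of_other_lt {Q : State → Act → ℝ} {s : State} {a : Act}
    (h : Q s (other a) < Q s a) : max (Q s C) (Q s D) = Q s a := by
  cases a
  · exact max_eq_left h.le
  · exact max_eq_right h.le

section PavlovTable

variable (r : Act → Act → ℝ) (γ ε : ℝ)

/-- Right-hand side of the self-play Bellman equation for the action `a1` when the opponent's
greedy action is `a2` and `v` gives the values of the next states. -/
def lookahead (v : State → ℝ) (a1 a2 : Act) : ℝ :=
  (1 - ε) * (r a1 a2 + γ * v (a1, a2)) + ε * (r a1 (other a2) + γ * v (a1, other a2))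

def rewardCoop : ℝ := (1 - ε) * r C C + ε * r C D

def rewardDefect : ℝ := (1 - ε) * r D D + ε * r D C

noncomputable def valueCoop : ℝ :=
  ((1 - γ * ε) * rewardCoop r ε + γ * ε * rewardDefect r ε) / (1 - γ)

noncomputable def valueDefect : ℝ :=
  (γ * (1 - ε) * rewardCoop r ε + (1 - γ * (1 - ε)) * rewardDefect r ε) / (1 - γ)

noncomputable def pavlovValue (s : State) : ℝ :=
  if pavlov s = C then valueCoop r γ ε else valueDefect r γ ε

noncomputable def pavlovQ (s : State) (a : Act) : ℝ :=
  lookahead r γ ε (pavlovValue r γ ε) a (pavlov s)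

lemma valueCoop_eq (hγ : γ ≠ 1) : valueCoop r γ ε =
    rewardCoop r ε + γ * ((1 - ε) * valueCoop r γ ε + ε * valueDefect r γ ε) := by
  have : 1 - γ ≠ 0 := sub_ne_zero.2 hγ.symm
  simp only [valueCoop, valueDefect]
  field_simp
  ring

lemma valueDefect_eq (hγ : γ ≠ 1) : valueDefect r γ ε =
    rewardDefect r ε + γ * ((1 - ε) * valueCoop r γ ε + ε * valueDefect r γ ε) := by
  have : 1 - γ ≠ 0 := sub_ne_zero.2 hγ.symm
  simp only [valueCoop, valueDefect]
  field_simp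
  ring

lemma valueCoop_sub_valueDefect (hγ : γ ≠ 1) :
    valueCoop r γ ε - valueDefect r γ ε = rewardCoop r ε - rewardDefect r ε := by
  linarith [valueCoop_eq r γ ε hγ, valueDefect_eq r γ ε hγ]

lemma pavlovQ_pavlov (hγ : γ ≠ 1) (s : State) :
    pavlovQ r γ ε s (pavlov s) = pavlovValue r γ ε s := by
  have hV := valueCoop_eq r γ ε hγ
  have hW := valueDefect_eq r γ ε hγ
  simp only [rewardCoop, rewardDefect] at hV hW
  obtain ⟨a | a, b | b⟩ := s <;>
    simp only [pavlovQ, lookahead, pavlovValue, pavlov, other, if_pos, reduceCtorEq, if_false] <;>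
    linarith

lemma pavlovQ_C_sub_D {s : State} (hs : pavlov s = C) :
    pavlovQ r γ ε s C - pavlovQ r γ ε s D =
      γ * (1 - 2 * ε) * (valueCoop r γ ε - valueDefect r γ ε)
        + ((1 - ε) * (r C C - r D C) + ε * (r C D - r D D)) := by
  simp only [pavlovQ, lookahead, hs, other]
  simp only [pavlovValue, pavlov, if_pos, reduceCtorEq, if_false]
  ring

lemma pavlovQ_D_sub_C {s : State} (hs : pavlov s = D) :
    pavlovQ r γ ε s D - pavlovQ r γ ε s C =
      γ * (1 - 2 * ε) * (valueCoop r γ ε - valueDefect r γ ε)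
        + ((1 - ε) * (r D D - r C D) + ε * (r D C - r C C)) := by
  simp only [pavlovQ, lookahead, hs, other]
  simp only [pavlovValue, pavlov, if_pos, reduceCtorEq, if_false]
  ring

theorem pavlovQ_bellman (hγ : γ ≠ 1)
    (hadv : ∀ s, pavlovQ r γ ε s (other (pavlov s)) < pavlovQ r γ ε s (pavlov s))
    (s : State) (a1 : Act) :
    pavlovQ r γ ε s a1 = lookahead r γ ε (fun s ↦ max (pavlovQ r γ ε s C) (pavlovQ r γ ε s D))
      a1 (greedy (pavlovQ r γ ε) (s.2, s.1)) := by
  have hmax : (fun s ↦ max (pavlovQ r γ ε s C) (pavlovQ r γ ε s D)) = pavlovValue r γ ε := by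
    funext s
    rw [max_eq_of_other_lt (hadv s), pavlovQ_pavlov r γ ε hγ]
  rw [greedy_eq_of_other_lt (hadv _), pavlov_swap, hmax]
  rfl

lemma pavlovQ_other_lt_pavlov {g : ℝ} (hg2 : g < 2) (hγ : γ ≠ 1)
    (hcond : γ * (1 - 2 * ε) * (2 * (g - 1) - 2 * g * ε) > 2 - g)
    (hrCC : r C C = 2 * g) (hrCD : r C D = g) (hrDC : r D C = 2 + g) (hrDD : r D D = 2)
    (s : State) : pavlovQ r γ ε s (other (pavlov s)) < pavlovQ r γ ε s (pavlov s) := by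
  have hgap : valueCoop r γ ε - valueDefect r γ ε = 2 * (g - 1) - 2 * g * ε := by
    rw [valueCoop_sub_valueDefect r γ ε hγ]
    simp only [rewardCoop, rewardDefect, hrCC, hrCD, hrDC, hrDD]
    ring
  cases hs : pavlov s
  · have := pavlovQ_C_sub_D r γ ε hs
    rw [hgap, hrCC, hrCD, hrDC, hrDD] at this
    simp only [other]
    linarith
  · have := pavlovQ_D_sub_C r γ ε hs
    rw [hgap, hrCC, hrCD, hrDC, hrDD] at this
    simp only [other]
    linarith

end PavlovTable

theorem pavlov_fixed_point_general
    (g γ ε : ℝ) (hg2 : g < 2)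
    (hγ1 : γ < 1)
    (hcond : γ * (1 - 2 * ε) * (2 * (g - 1) - 2 * g * ε) > 2 - g)
    (r : Act → Act → ℝ)
    (hrCC : r C C = 2 * g) (hrCD : r C D = g)
    (hrDC : r D C = 2 + g) (hrDD : r D D = 2)
    (RC RD : ℝ)
    (hRC : RC = (1 - ε) * (2 * g) + ε * g)
    (hRD : RD = (1 - ε) * 2 + ε * (2 + g))
    (Q : State → Act → ℝ)
    (h1 : Q (C, C) C = ((1 - γ * ε) * RC + γ * ε * RD) / (1 - γ))
    (h1' : Q (D, D) C = ((1 - γ * ε) * RC + γ * ε * RD) / (1 - γ))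
    (h2 : Q (C, D) D = (γ * (1 - ε) * RC + (1 - γ * (1 - ε)) * RD) / (1 - γ))
    (h2' : Q (D, C) D = (γ * (1 - ε) * RC + (1 - γ * (1 - ε)) * RD) / (1 - γ))
    (h3 : Q (C, C) D = γ * (1 - ε) * Q (D, C) D + γ * ε * Q (D, D) C
            + (1 - ε) * (2 + g) + 2 * ε)
    (h3' : Q (D, D) D = γ * (1 - ε) * Q (D, C) D + γ * ε * Q (D, D) C
            + (1 - ε) * (2 + g) + 2 * ε)
    (h4 : Q (C, D) C = γ * (1 - ε) * Q (C, D) D + γ * ε * Q (C, C) C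
            + (1 - ε) * g + 2 * g * ε)
    (h4' : Q (D, C) C = γ * (1 - ε) * Q (C, D) D + γ * ε * Q (C, C) C
            + (1 - ε) * g + 2 * g * ε) :
    (∀ (s : State) (a1 : Act),
        Q s a1 =
          (1 - ε) * (r a1 (greedy Q (s.2, s.1))
            + γ * max (Q (a1, greedy Q (s.2, s.1)) C) (Q (a1, greedy Q (s.2, s.1)) D))
          + ε * (r a1 (other (greedy Q (s.2, s.1)))
            + γ * max (Q (a1, other (greedy Q (s.2, s.1))) C)
                (Q (a1, other (greedy Q (s.2, s.1))) D)))
    ∧ Q (C, C) C > Q (C, C) D ∧ Q (D, D) C > Q (D, D) D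
    ∧ Q (C, D) C < Q (C, D) D ∧ Q (D, C) C < Q (D, C) D := by
  have hγ : γ ≠ 1 := hγ1.ne
  have hV : valueCoop r γ ε = ((1 - γ * ε) * RC + γ * ε * RD) / (1 - γ) := by
    simp only [valueCoop, rewardCoop, rewardDefect, hrCC, hrCD, hrDC, hrDD, hRC, hRD]
  have hW : valueDefect r γ ε = (γ * (1 - ε) * RC + (1 - γ * (1 - ε)) * RD) / (1 - γ) := by
    simp only [valueDefect, rewardCoop, rewardDefect, hrCC, hrCD, hrDC, hrDD, hRC, hRD]
  rw [← hV] at h1 h1'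
  rw [← hW] at h2 h2'
  have hQ : Q = pavlovQ r γ ε := by
    have hVeq := valueCoop_eq r γ ε hγ
    have hWeq := valueDefect_eq r γ ε hγ
    simp only [rewardCoop, rewardDefect, hrCC, hrCD, hrDC, hrDD] at hVeq hWeq
    funext ⟨a, b⟩ c
    cases a <;> cases b <;> cases c <;>
      simp only [pavlovQ, lookahead, pavlovValue, pavlov, other, if_pos, reduceCtorEq, if_false,
        hrCC, hrCD, hrDC, hrDD, h1, h1', h2, h2', h3, h3', h4, h4'] <;>
      linarith
  subst hQ
  have hadv := pavlovQ_other_lt_pavlov r γ ε hg2 hγ hcond hrCC hrCD hrDC hrDD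
  exact ⟨pavlovQ_bellman r γ ε hγ hadv, hadv (C, C), hadv (D, D), hadv (C, D), hadv (D, C)⟩

/-- the explicitly given Q-table is an ε-greedy fixed point of the
self-play multi-agent Bellman equation whose greedy policy is Pavlov. -/
theorem pavlov_fixed_point
    (g γ ε : ℝ) (hg1 : 1 < g) (hg2 : g < 2)
    (hγ0 : 0 < γ) (hγ1 : γ < 1) (hε0 : 0 ≤ ε) (hε1 : ε < 1 / 2)
    (hcond : γ * (1 - 2 * ε) * (2 * (g - 1) - 2 * g * ε) > 2 - g)
    (r : Act → Act → ℝ)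
    (hrCC : r C C = 2 * g) (hrCD : r C D = g)
    (hrDC : r D C = 2 + g) (hrDD : r D D = 2)
    (RC RD : ℝ)
    (hRC : RC = (1 - ε) * (2 * g) + ε * g)
    (hRD : RD = (1 - ε) * 2 + ε * (2 + g))
    (Q : State → Act → ℝ)
    (h1 : Q (C, C) C = ((1 - γ * ε) * RC + γ * ε * RD) / (1 - γ))
    (h1' : Q (D, D) C = ((1 - γ * ε) * RC + γ * ε * RD) / (1 - γ))
    (h2 : Q (C, D) D = (γ * (1 - ε) * RC + (1 - γ * (1 - ε)) * RD) / (1 - γ))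
    (h2' : Q (D, C) D = (γ * (1 - ε) * RC + (1 - γ * (1 - ε)) * RD) / (1 - γ))
    (h3 : Q (C, C) D = γ * (1 - ε) * Q (D, C) D + γ * ε * Q (D, D) C
            + (1 - ε) * (2 + g) + 2 * ε)
    (h3' : Q (D, D) D = γ * (1 - ε) * Q (D, C) D + γ * ε * Q (D, D) C
            + (1 - ε) * (2 + g) + 2 * ε)
    (h4 : Q (C, D) C = γ * (1 - ε) * Q (C, D) D + γ * ε * Q (C, C) C
            + (1 - ε) * g + 2 * g * ε)
    (h4' : Q (D, C) C = γ * (1 - ε) * Q (C, D) D + γ * ε * Q (C, C) C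
            + (1 - ε) * g + 2 * g * ε) :
    (∀ (s : State) (a1 : Act),
        Q s a1 =
          (1 - ε) * (r a1 (greedy Q (s.2, s.1))
            + γ * max (Q (a1, greedy Q (s.2, s.1)) C) (Q (a1, greedy Q (s.2, s.1)) D))
          + ε * (r a1 (other (greedy Q (s.2, s.1)))
            + γ * max (Q (a1, other (greedy Q (s.2, s.1))) C)
                (Q (a1, other (greedy Q (s.2, s.1))) D)))
    ∧ Q (C, C) C > Q (C, C) D ∧ Q (D, D) C > Q (D, D) D
    ∧ Q (C, D) C < Q (C, D) D ∧ Q (D, C) C < Q (D, C) D :=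
  pavlov_fixed_point_general g γ ε hg2 hγ1 hcond r hrCC hrCD hrDC hrDD RC RD hRC hRD Q h1 h1' h2 h2'
    h3 h3' h4 h4'
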